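/- The race variant construction produces a subtrace up to the replaced receive: given trace τ with τ(p) = A ; rec(ℓ,cs) ; A' and ℓ' ∈ race_set_τ(ℓ), the intermediate trace τ₁ = rdep(A', τ[p ↦ A ; rec(ℓ,cs)]) is a subtrace of τ (τ₁ ≪ τ). -/

import Mathlib

/-- Actions of a message-passing concurrent language with dynamic
process spawning and selective receives. -/
inductive MAction (Pid Tag Val Cstr : Type) : Type where
  | spawn (p : Pid)
  | send (t : Tag) (v : Val) (p : Pid)
  | receive (t : Tag) (cs : Cstr)

/-- An event `p : a` consists of a pid and an action. -/
structure MEvent (Pid Tag Val Cstr : Type) : Type where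
  pid : Pid
  act : MAction Pid Tag Val Cstr

/-- `List.get?` (removed from Lean core), restored with its old definition. -/
def List.get? {α : Type*} : List α → ℕ → Option α
  | a :: _, 0 => some a
  | _ :: as, n + 1 => List.get? as n
  | [], _ => none

variable {Pid Tag Val Cstr : Type}

/-- Direct (base) dependency between two events: same pid, spawn
dependency, or send/receive dependency on the same message tag. -/
def EvDep (e e' : MEvent Pid Tag Val Cstr) : Prop :=
  e.pid = e'.pid ∨ e.act = MAction.spawn e'.pid ∨
    ∃ t v cs, e.act = MAction.send t v e'.pid ∧ e'.act = MAction.receive t cs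

/-- Two events are independent if neither directly depends on the other. -/
def Indep (e e' : MEvent Pid Tag Val Cstr) : Prop := ¬ EvDep e e' ∧ ¬ EvDep e' e

/-- Base happened-before relation on positions of a sequence of events. -/
def hbBase (S : List (MEvent Pid Tag Val Cstr)) (i j : ℕ) : Prop :=
  i < j ∧ ∃ ei ej, S.get? i = some ei ∧ S.get? j = some ej ∧ EvDep ei ej

/-- The happened-before relation `⇝_S` on positions: the transitive
closure of the base relation. -/
def hb (S : List (MEvent Pid Tag Val Cstr)) : ℕ → ℕ → Prop :=
  Relation.TransGen (hbBase S)

/-- The happened-before relation on events (rather than positions). -/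
def hbE (S : List (MEvent Pid Tag Val Cstr)) (e e' : MEvent Pid Tag Val Cstr) : Prop :=
  ∃ i j, S.get? i = some e ∧ S.get? j = some e' ∧ hb S i j

/-- A single swap of two consecutive independent events. -/
def Swap (S S' : List (MEvent Pid Tag Val Cstr)) : Prop :=
  ∃ (L₁ L₂ : List (MEvent Pid Tag Val Cstr)) (e e' : MEvent Pid Tag Val Cstr),
    Indep e e' ∧ S = L₁ ++ e :: e' :: L₂ ∧ S' = L₁ ++ e' :: e :: L₂

/-- Causal equivalence `S ≈ S'`: a finite number of swaps of consecutive
independent events (note that `Swap` is symmetric). -/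
def CausalEq (S S' : List (MEvent Pid Tag Val Cstr)) : Prop :=
  Relation.ReflTransGen Swap S S'

/-- Well-formedness conditions of an interleaving with initial pid `p1`,
parameterized by the matching function `mtch` on values and constraints. -/
def IsInterleaving (mtch : Val → Cstr → Bool) (p1 : Pid)
    (S : List (MEvent Pid Tag Val Cstr)) : Prop :=
  -- (1) every event of a non-initial pid is preceded by its spawn
  (∀ j ej, S.get? j = some ej → ej.pid = p1 ∨
     ∃ i ei, i < j ∧ S.get? i = some ei ∧ ei.pid ≠ ej.pid ∧
       ei.act = MAction.spawn ej.pid) ∧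
  -- (2) every receive is preceded by a matching send
  (∀ j ej t cs, S.get? j = some ej → ej.act = MAction.receive t cs →
     ∃ i ei v, i < j ∧ S.get? i = some ei ∧
       ei.act = MAction.send t v ej.pid ∧ mtch v cs = true) ∧
  -- (3) FIFO with matching between each pair of processes
  (∀ i j ei ej t v cs, S.get? i = some ei → S.get? j = some ej →
     ei.act = MAction.send t v ej.pid → ej.act = MAction.receive t cs →
     ∀ i' ei' t' v', i' < i → S.get? i' = some ei' → ei'.pid = ei.pid →
       ei'.act = MAction.send t' v' ej.pid →
       mtch v' cs = false ∨ ∃ j' ej' cs', j' < j ∧ S.get? j' = some ej' ∧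
         ej'.pid = ej.pid ∧ ej'.act = MAction.receive t' cs') ∧
  -- (4) uniqueness of pids (spawn arguments) and message tags
  ((∀ i j ei ej q, S.get? i = some ei → S.get? j = some ej →
     ei.act = MAction.spawn q → ej.act = MAction.spawn q → i = j) ∧
   (∀ i j ei ej t v q v' q', S.get? i = some ei → S.get? j = some ej →
     ei.act = MAction.send t v q → ej.act = MAction.send t v' q' → i = j))

/-- The sequence of actions of process `p` in `S`, in order. -/
def actions [DecidableEq Pid] (p : Pid) (S : List (MEvent Pid Tag Val Cstr)) :
    List (MAction Pid Tag Val Cstr) :=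
  (S.filter (fun e => decide (e.pid = p))).map MEvent.act

/-- The trace of an interleaving: the mapping from each pid to its
sequence of actions. -/
def tr [DecidableEq Pid] (S : List (MEvent Pid Tag Val Cstr)) :
    Pid → List (MAction Pid Tag Val Cstr) :=
  fun p => actions p S

/-- `S` is a linearization of the trace `τ` (with initial pid `p1`). -/
def InSched [DecidableEq Pid] (mtch : Val → Cstr → Bool) (p1 : Pid)
    (τ : Pid → List (MAction Pid Tag Val Cstr))
    (S : List (MEvent Pid Tag Val Cstr)) : Prop :=
  IsInterleaving mtch p1 S ∧ tr S = τ

/-- A trace is a mapping coming from some interleaving. -/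
def IsTrace [DecidableEq Pid] (mtch : Val → Cstr → Bool) (p1 : Pid)
    (τ : Pid → List (MAction Pid Tag Val Cstr)) : Prop :=
  ∃ S, InSched mtch p1 τ S

/-- Subtrace relation: `τ' ≪ τ` iff each `τ' p` is a prefix of `τ p`. -/
def Subtrace (τ' τ : Pid → List (MAction Pid Tag Val Cstr)) : Prop :=
  ∀ p, τ' p <+: τ p

/-- Base happened-before relation on trace events, identified by a pid
and a position in the action sequence of that pid. -/
def hbTBase (τ : Pid → List (MAction Pid Tag Val Cstr)) :
    Pid × ℕ → Pid × ℕ → Prop := fun x y =>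
  (x.1 = y.1 ∧ x.2 < y.2) ∨
  ((τ x.1).get? x.2 = some (MAction.spawn y.1)) ∨
  (∃ t v cs, (τ x.1).get? x.2 = some (MAction.send t v y.1) ∧
     (τ y.1).get? y.2 = some (MAction.receive t cs))

/-- Happened-before relation `⇝_τ` induced by a trace. -/
def hbT (τ : Pid → List (MAction Pid Tag Val Cstr)) :
    Pid × ℕ → Pid × ℕ → Prop :=
  Relation.TransGen (hbTBase τ)

/-- `ℓ'` races with the message `ℓ` received by the `j`-th action of
process `p` (a receive with constraint `cs`), via the `i`-th action of
the sender `p'`. -/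
def InRaceSetVia (mtch : Val → Cstr → Bool)
    (τ : Pid → List (MAction Pid Tag Val Cstr)) (p : Pid) (j : ℕ)
    (t : Tag) (cs : Cstr) (p' : Pid) (i : ℕ) (t' : Tag) : Prop :=
  t' ≠ t ∧ ∃ v', (τ p').get? i = some (MAction.send t' v' p) ∧
    mtch v' cs = true ∧ ¬ hbT τ (p, j) (p', i) ∧
    ∀ i' t'' v'', i' < i → (τ p').get? i' = some (MAction.send t'' v'' p) →
      mtch v'' cs = false ∨
        ∃ j' cs'', j' < j ∧ (τ p).get? j' = some (MAction.receive t'' cs'')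

/-- `t' ∈ race_set_τ(t)` for the receive at position `j` of process `p`. -/
def InRaceSet (mtch : Val → Cstr → Bool)
    (τ : Pid → List (MAction Pid Tag Val Cstr)) (p : Pid) (j : ℕ)
    (t : Tag) (cs : Cstr) (t' : Tag) : Prop :=
  ∃ p' i, InRaceSetVia mtch τ p j t cs p' i t'

/-- The function `rdep`, removing the actions that causally depend on a
given sequence of actions, given as an inductive relation mirroring its
defining equations. -/
inductive RDep [DecidableEq Pid] :
    List (MAction Pid Tag Val Cstr) →
    (Pid → List (MAction Pid Tag Val Cstr)) →
    (Pid → List (MAction Pid Tag Val Cstr)) → Prop where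
  | nil (τ : Pid → List (MAction Pid Tag Val Cstr)) : RDep [] τ τ
  | rcv (t : Tag) (cs : Cstr) (A' : List (MAction Pid Tag Val Cstr)) (τ τ' :
      Pid → List (MAction Pid Tag Val Cstr)) :
      RDep A' τ τ' → RDep (MAction.receive t cs :: A') τ τ'
  | spwn (p : Pid) (A' : List (MAction Pid Tag Val Cstr)) (τ τ' :
      Pid → List (MAction Pid Tag Val Cstr)) :
      RDep (A' ++ τ p) (Function.update τ p []) τ' →
      RDep (MAction.spawn p :: A') τ τ'
  | send_rec (t : Tag) (v : Val) (p : Pid) (cs : Cstr)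
      (A' A'' Astar : List (MAction Pid Tag Val Cstr))
      (τ τ' : Pid → List (MAction Pid Tag Val Cstr)) :
      τ p = A'' ++ MAction.receive t cs :: Astar →
      RDep (A' ++ Astar) (Function.update τ p A'') τ' →
      RDep (MAction.send t v p :: A') τ τ'
  | send_norec (t : Tag) (v : Val) (p : Pid)
      (A' : List (MAction Pid Tag Val Cstr))
      (τ τ' : Pid → List (MAction Pid Tag Val Cstr)) :
      (∀ cs, MAction.receive t cs ∉ τ p) → RDep A' τ τ' →
      RDep (MAction.send t v p :: A') τ τ'


theorem subtrace_trans {Pid Tag Val Cstr : Type} {τ₁ τ₂ τ₃ : Pid → List (MAction Pid Tag Val Cstr)}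
    (h1 : Subtrace τ₁ τ₂) (h2 : Subtrace τ₂ τ₃) : Subtrace τ₁ τ₃ :=
  fun p => (h1 p).trans (h2 p)

theorem subtrace_update {Pid Tag Val Cstr : Type} [DecidableEq Pid]
    (τ : Pid → List (MAction Pid Tag Val Cstr)) (p : Pid)
    (L : List (MAction Pid Tag Val Cstr)) (h : L <+: τ p) :
    Subtrace (Function.update τ p L) τ := by
  intro q
  by_cases hq : q = p
  · subst hq; simpa using h
  · simp [Function.update_of_ne hq]

theorem rdep_subtrace_aux {Pid Tag Val Cstr : Type} [DecidableEq Pid]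
    {A : List (MAction Pid Tag Val Cstr)}
    {τ τ' : Pid → List (MAction Pid Tag Val Cstr)}
    (h : RDep A τ τ') : Subtrace τ' τ := by
  induction h with
  | nil τ => exact fun p => List.prefix_refl _
  | rcv t cs A' τ τ' _ ih => exact ih
  | spwn p A' τ τ' _ ih =>
      exact subtrace_trans ih (subtrace_update τ p [] List.nil_prefix)
  | send_rec t v p cs A' A'' Astar τ τ' heq _ ih =>
      exact subtrace_trans ih (subtrace_update τ p A'' (heq ▸ List.prefix_append _ _))
  | send_norec t v p A' τ τ' _ _ ih => exact ih

/-- the race-variant construction produces a subtrace up to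
the replaced receive: `rdep(A', τ[p ↦ A ; rec(t,cs)])` is a subtrace of
`τ`. -/
theorem rdep_subtrace [DecidableEq Pid] (mtch : Val → Cstr → Bool)
    (τ τ₁ : Pid → List (MAction Pid Tag Val Cstr)) (p : Pid)
    (A A' : List (MAction Pid Tag Val Cstr)) (t : Tag) (cs : Cstr) (t' : Tag)
    (hτp : τ p = A ++ MAction.receive t cs :: A')
    (hrace : InRaceSet mtch τ p A.length t cs t')
    (hrdep : RDep A' (Function.update τ p (A ++ [MAction.receive t cs])) τ₁) :
    Subtrace τ₁ τ := by
  refine subtrace_trans (rdep_subtrace_aux hrdep) (subtrace_update τ p _ ?_)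
  rw [hτp]
  exact ⟨A', by simp⟩
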